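/- arXiv:2205.00041 — 3 statements merged into one kernel-verified Lean document; each statement's English description precedes it below -/
import Mathlib

section
/- Every divisor of degree 0 on an elliptic curve is linearly equivalent (i.e. equal modulo principal divisors) to a divisor of the form [p] − [O] for some point p on the curve. -/
open WeierstrassCurve Finsupp FractionalIdeal
open scoped nonZeroDivisors

variable {F : Type*} [Field F]

/-- The invertible fractional ideal of the affine coordinate ring attached to a point of an
elliptic curve: the point at infinity `O` gives the unit ideal, and an affine point gives the
maximal ideal of functions vanishing at it.  Under the divisor/fractional-ideal correspondence
for the affine curve, a degree-zero divisor `D = Σ nᵢ [pᵢ] + n_O [O]` is the divisor of a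
nonzero rational function `f` precisely when the fractional ideal `Π (ideal of pᵢ)^nᵢ` is the
principal fractional ideal generated by `f` (the multiplicity at `O` being determined by the
degree-zero condition). -/
noncomputable def pointIdeal {W : WeierstrassCurve F} :
    W.toAffine.Point →
      (FractionalIdeal (W.toAffine.CoordinateRing)⁰ W.toAffine.FunctionField)ˣ
  | .zero => 1
  | .some _ _ h => Affine.CoordinateRing.XYIdeal' h

/-- The fractional ideal attached to the (affine part of the) divisor `D`. -/
noncomputable def divisorIdeal {W : WeierstrassCurve F} (D : W.toAffine.Point →₀ ℤ) :
    (FractionalIdeal (W.toAffine.CoordinateRing)⁰ W.toAffine.FunctionField)ˣ :=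
  D.support.prod fun p => pointIdeal p ^ D p

/-- The degree of a divisor. -/
def divDegree {W : WeierstrassCurve F} (D : W.toAffine.Point →₀ ℤ) : ℤ := D.sum fun _ n => n

open Classical in
/-- The weighted sum of the points of a divisor for the elliptic addition law. -/
noncomputable def divPointSum {W : WeierstrassCurve F} (D : W.toAffine.Point →₀ ℤ) :
    W.toAffine.Point :=
  D.sum fun p n => n • p

/-! Mathlib's homomorphism `toClass` from the group of points to the class group of
the coordinate ring sends `p` to the class of `pointIdeal p`. By additivity it sends
`divPointSum D` to the class of `divisorIdeal D`, so `divisorIdeal D` and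
`pointIdeal (divPointSum D)` differ by a principal fractional ideal. -/

variable {W : WeierstrassCurve F}

open Classical in
lemma WeierstrassCurve.Affine.Point.toClass_eq_ofMul_mk_pointIdeal (p : W.toAffine.Point) :
    Affine.Point.toClass p =
      Additive.ofMul (ClassGroup.mk W.toAffine.FunctionField (pointIdeal p)) := by
  cases p with
  | zero => simp [pointIdeal]
  | some h => rfl

open Classical in
lemma WeierstrassCurve.Affine.Point.toClass_divPointSum (D : W.toAffine.Point →₀ ℤ) :
    Affine.Point.toClass (divPointSum D) =
      Additive.ofMul (ClassGroup.mk W.toAffine.FunctionField (divisorIdeal D)) := by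
  rw [divPointSum, map_finsuppSum, divisorIdeal, map_prod, ofMul_prod, Finsupp.sum]
  refine Finset.sum_congr rfl fun p _ => ?_
  rw [map_zsmul, toClass_eq_ofMul_mk_pointIdeal, map_zpow, ofMul_zpow]

open Classical in
theorem ClassGroup.mk_divisorIdeal_eq_mk_pointIdeal_divPointSum (D : W.toAffine.Point →₀ ℤ) :
    ClassGroup.mk W.toAffine.FunctionField (divisorIdeal D) =
      ClassGroup.mk W.toAffine.FunctionField (pointIdeal (divPointSum D)) :=
  Additive.ofMul.injective <| by
    rw [← Affine.Point.toClass_divPointSum, Affine.Point.toClass_eq_ofMul_mk_pointIdeal]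

theorem divisor_equiv_point_sub_zero_general (W : WeierstrassCurve F)
    (D : W.toAffine.Point →₀ ℤ) :
    ∃ (p : W.toAffine.Point) (f : W.toAffine.FunctionField), f ≠ 0 ∧
      (divisorIdeal D : FractionalIdeal (W.toAffine.CoordinateRing)⁰ W.toAffine.FunctionField) =
        spanSingleton (W.toAffine.CoordinateRing)⁰ f *
          ((pointIdeal p * (pointIdeal (0 : W.toAffine.Point))⁻¹ :
            (FractionalIdeal (W.toAffine.CoordinateRing)⁰ W.toAffine.FunctionField)ˣ) :
            FractionalIdeal (W.toAffine.CoordinateRing)⁰ W.toAffine.FunctionField) := by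
  obtain ⟨f, hf⟩ :=
    ClassGroup.mk_eq_mk.mp (ClassGroup.mk_divisorIdeal_eq_mk_pointIdeal_divPointSum D).symm
  refine ⟨divPointSum D, f, f.ne_zero, ?_⟩
  have h_zero : pointIdeal (0 : W.toAffine.Point) = 1 := rfl
  rw [h_zero, inv_one, mul_one, ← hf, Units.val_mul, coe_toPrincipalIdeal, mul_comm]

/-- every degree-zero divisor `D` on an elliptic curve is linearly equivalent,
modulo divisors of nonzero rational functions, to `[p] − [O]` for some point `p`:
`D = div(f) + [p] − [O]` as (affine parts of) divisors, read through the divisor/fractional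
ideal correspondence. -/
theorem divisor_equiv_point_sub_zero (W : WeierstrassCurve F) [W.IsElliptic]
    (D : W.toAffine.Point →₀ ℤ) (hdeg : divDegree D = 0) :
    ∃ (p : W.toAffine.Point) (f : W.toAffine.FunctionField), f ≠ 0 ∧
      (divisorIdeal D : FractionalIdeal (W.toAffine.CoordinateRing)⁰ W.toAffine.FunctionField) =
        spanSingleton (W.toAffine.CoordinateRing)⁰ f *
          ((pointIdeal p * (pointIdeal (0 : W.toAffine.Point))⁻¹ :
            (FractionalIdeal (W.toAffine.CoordinateRing)⁰ W.toAffine.FunctionField)ˣ) :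
            FractionalIdeal (W.toAffine.CoordinateRing)⁰ W.toAffine.FunctionField) :=
  divisor_equiv_point_sub_zero_general W D
end

section
/- A degree-0 divisor D = Σ n_i [p_i] on an elliptic curve E is principal if and only if Σ n_i · p_i = O in the group law of E. -/
open WeierstrassCurve Finsupp FractionalIdeal
open scoped nonZeroDivisors

variable {F : Type*} [Field F]

/-! The point-to-class map `Affine.Point.toClass`, sending an affine point to the class of its
maximal ideal, is an injective group homomorphism into the class group of the coordinate ring.
So `Σ nᵢ · pᵢ = O` exactly when the class of `Π (ideal of pᵢ)^nᵢ` is trivial, i.e. when this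
fractional ideal is principal. -/

theorem ClassGroup.mk_eq_one_iff_exists_spanSingleton {R K : Type*} [CommRing R] [IsDomain R]
    [Field K] [Algebra R K] [IsFractionRing R K] {I : (FractionalIdeal R⁰ K)ˣ} :
    ClassGroup.mk K I = 1 ↔ ∃ f : K, f ≠ 0 ∧ spanSingleton R⁰ f = I := by
  rw [ClassGroup.mk_eq_one_iff, isPrincipal_iff]
  refine ⟨fun ⟨f, hf⟩ => ⟨f, ?_, hf.symm⟩, fun ⟨f, _, hf⟩ => ⟨f, hf.symm⟩⟩
  rintro rfl
  exact I.ne_zero (hf.trans spanSingleton_zero)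

namespace WeierstrassCurve.Affine.Point

variable {W : WeierstrassCurve F}

open Classical in
lemma toClass_eq_ofMul_pointIdeal (p : W.toAffine.Point) :
    toClass p = Additive.ofMul (ClassGroup.mk W.toAffine.FunctionField (pointIdeal p)) := by
  cases p with
  | zero => simp [pointIdeal]
  | some _ _ h => rfl

open Classical in
lemma toClass_divPointSum_s7 (D : W.toAffine.Point →₀ ℤ) :
    toClass (divPointSum D) =
      Additive.ofMul (ClassGroup.mk W.toAffine.FunctionField (divisorIdeal D)) := by
  rw [divPointSum, divisorIdeal, map_finsuppSum, map_prod, Finsupp.sum, ofMul_prod]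
  refine Finset.sum_congr rfl fun p _ => ?_
  rw [map_zsmul, toClass_eq_ofMul_pointIdeal, map_zpow, ofMul_zpow]

end WeierstrassCurve.Affine.Point

theorem divisor_principal_iff_pointSum_eq_zero_general (W : WeierstrassCurve F)
    (D : W.toAffine.Point →₀ ℤ) :
    (∃ f : W.toAffine.FunctionField, f ≠ 0 ∧
        spanSingleton (W.toAffine.CoordinateRing)⁰ f = (divisorIdeal D :
          FractionalIdeal (W.toAffine.CoordinateRing)⁰ W.toAffine.FunctionField)) ↔
      divPointSum D = 0 := by
  classical
  rw [← Affine.Point.toClass_eq_zero, Affine.Point.toClass_divPointSum_s7, ofMul_eq_zero,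
    ClassGroup.mk_eq_one_iff_exists_spanSingleton]

/-- a degree-zero divisor `D = Σ nᵢ [pᵢ]` on an elliptic curve is principal
(i.e. it is the divisor of a nonzero rational function on the curve) iff `Σ nᵢ · pᵢ = O` in
the group law. -/
theorem divisor_principal_iff_pointSum_eq_zero (W : WeierstrassCurve F) [W.IsElliptic]
    (D : W.toAffine.Point →₀ ℤ) (hdeg : divDegree D = 0) :
    (∃ f : W.toAffine.FunctionField, f ≠ 0 ∧
        spanSingleton (W.toAffine.CoordinateRing)⁰ f = (divisorIdeal D :
          FractionalIdeal (W.toAffine.CoordinateRing)⁰ W.toAffine.FunctionField)) ↔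
      divPointSum D = 0 :=
  divisor_principal_iff_pointSum_eq_zero_general W D
end

section
/- Let E be an elliptic curve over a number field K, δ ∈ E(K), and J a maximal ideal of K[u,v] containing the defining equation of E. If δ is not a torsion point, then no two distinct roots of J lie on the same orbit under translation by δ. -/
/-!
Two roots `P`, `Q` of the maximal ideal `J` are conjugate: `Q = σ P` for some `K`-embedding
`σ : K̄ → K̄`. If `Q = P + N • δ`, then, as `σ` fixes the `K`-rational point `δ`,
`σ^k P = P + (k N) • δ` for all `k`. The coordinates of `σ^k P` are roots of the minimal
polynomials of those of `P`, so two of these points coincide, and since `δ` has infinite order,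
`N = 0`.
-/

open WeierstrassCurve Polynomial
open scoped WeierstrassCurve.Affine

variable {K : Type*} [Field K]

/-- `(x, y) ∈ K̄²` is a root of an ideal `J` of `K[u,v] = K[X][Y]` if every element of `J`
vanishes at `(x, y)`. -/
def IsRootOf (J : Ideal (Polynomial (Polynomial K))) (x y : AlgebraicClosure K) : Prop :=
  ∀ f ∈ J, ((f.map (mapRingHom (algebraMap K (AlgebraicClosure K)))).evalEval x y) = 0

theorem AlgHom.exists_comp_eq_of_isAlgClosed {F L M : Type*} [Field F] [Field L] [Field M]
    [Algebra F L] [Algebra F M] [IsAlgClosed M] [Algebra.IsAlgebraic F M]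
    (φ₁ φ₂ : L →ₐ[F] M) : ∃ σ : M →ₐ[F] M, σ.comp φ₁ = φ₂ := by
  let _ : Algebra L M := φ₁.toAlgebra
  have : IsScalarTower F L M := .of_algebraMap_eq fun c => (φ₁.commutes c).symm
  have : Algebra.IsAlgebraic L M := .tower_top (K := F) L
  obtain ⟨σ, hσ⟩ := IsAlgClosed.surjective_domRestrict_of_isAlgebraic (L := L) (E := M) φ₂
  exact ⟨σ, hσ⟩

theorem AlgHom.exists_lt_pow_apply_eq {F L : Type*} [Field F] [CommRing L] [IsDomain L]
    [Algebra F L] (σ : L →ₐ[F] L) {x y : L} (hx : IsIntegral F x) (hy : IsIntegral F y) :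
    ∃ a b : ℕ, a < b ∧ (σ ^ a) x = (σ ^ b) x ∧ (σ ^ a) y = (σ ^ b) y := by
  have pow_apply_mem {z : L} (hz : IsIntegral F z) (k : ℕ) :
      (σ ^ k) z ∈ (minpoly F z).rootSet L := by
    rw [mem_rootSet, aeval_algHom_apply, minpoly.aeval, map_zero]
    exact ⟨minpoly.ne_zero hz, rfl⟩
  obtain ⟨a, b, hab, hxy⟩ := Set.Finite.exists_lt_map_eq_of_forall_mem
    (f := fun k => ((σ ^ k) x, (σ ^ k) y))
    (fun k => Set.mk_mem_prod (pow_apply_mem hx k) (pow_apply_mem hy k))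
    ((rootSet_finite _ L).prod (rootSet_finite _ L))
  exact ⟨a, b, hab, Prod.ext_iff.1 hxy⟩

theorem AddMonoidHom.iterate_apply_eq_add_nsmul {A : Type*} [AddCommMonoid A] (f : A →+ A)
    {P e : A} (he : f e = e) (hP : f P = P + e) (k : ℕ) : f^[k] P = P + k • e := by
  induction k with
  | zero => simp
  | succ k ih =>
    rw [Function.iterate_succ_apply', ih, map_add, map_nsmul, he, hP, succ_nsmul, add_assoc,
      add_comm e]

theorem WeierstrassCurve.Affine.Point.map_pow {R S F : Type*} [CommRing R] [CommRing S]
    [Field F] [DecidableEq F] {W' : Affine R} [Algebra R S] [Algebra R F] [Algebra S F]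
    [IsScalarTower R S F]
    (σ : F →ₐ[S] F) (k : ℕ) : ⇑(map (W' := W') (σ ^ k)) = (⇑(map (W' := W') σ))^[k] := by
  induction k with
  | zero => funext P; exact map_id P
  | succ k ih =>
    funext P
    rw [pow_succ', Function.iterate_succ_apply', ← ih]
    exact (map_map _ _ P).symm

theorem Polynomial.aevalAeval_eq_evalEval_map {R A : Type*} [CommSemiring R] [CommSemiring A]
    [Algebra R A] (x y : A) (f : Polynomial (Polynomial R)) :
    aevalAeval x y f = (f.map (mapRingHom (algebraMap R A))).evalEval x y := by
  have : (aevalAeval (R := R) x y : Polynomial (Polynomial R) →+* A) =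
      eval₂RingHom (eval₂RingHom (algebraMap R A) x) y := by
    ext <;> simp
  rw [← eval₂_eval₂RingHom_apply]
  exact congr($this f)

theorem isRootOf_iff_forall_aevalAeval {J : Ideal (Polynomial (Polynomial K))}
    {x y : AlgebraicClosure K} : IsRootOf J x y ↔ ∀ f ∈ J, aevalAeval x y f = 0 := by
  simp only [IsRootOf, aevalAeval_eq_evalEval_map]

theorem IsRootOf.exists_algHom_eq {J : Ideal (Polynomial (Polynomial K))} [J.IsMaximal]
    {x₁ y₁ x₂ y₂ : AlgebraicClosure K} (h₁ : IsRootOf J x₁ y₁) (h₂ : IsRootOf J x₂ y₂) :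
    ∃ σ : AlgebraicClosure K →ₐ[K] AlgebraicClosure K, σ x₁ = x₂ ∧ σ y₁ = y₂ := by
  rw [isRootOf_iff_forall_aevalAeval] at h₁ h₂
  let _ := Ideal.Quotient.field J
  obtain ⟨σ, hσ⟩ := AlgHom.exists_comp_eq_of_isAlgClosed
    (Ideal.Quotient.liftₐ J _ h₁) (Ideal.Quotient.liftₐ J _ h₂)
  have h := congr(($hσ).comp (Ideal.Quotient.mkₐ K J))
  rw [AlgHom.comp_assoc, Ideal.Quotient.liftₐ_comp, Ideal.Quotient.liftₐ_comp] at h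
  refine ⟨σ, ?_, ?_⟩
  · simpa [aevalAeval_X] using congr($h (C X))
  · simpa [aevalAeval_Y] using congr($h X)

open scoped Classical in
theorem roots_of_maximal_ideal_distinct_orbits_general
    (E : WeierstrassCurve K) (δ : (E.baseChange K).toAffine.Point)
    (hδ : ∀ N : ℕ, 0 < N → N • δ ≠ 0)
    (J : Ideal (Polynomial (Polynomial K))) (hJ : J.IsMaximal)
    {x₁ y₁ x₂ y₂ : AlgebraicClosure K}
    (h₁ : IsRootOf J x₁ y₁) (h₂ : IsRootOf J x₂ y₂)
    (hns₁ : (E.baseChange (AlgebraicClosure K)).toAffine.Nonsingular x₁ y₁)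
    (hns₂ : (E.baseChange (AlgebraicClosure K)).toAffine.Nonsingular x₂ y₂)
    (N : ℤ)
    (horb : Affine.Point.some _ _ hns₂ = Affine.Point.some _ _ hns₁ +
      N • Affine.Point.map (W' := E) (Algebra.ofId K (AlgebraicClosure K)) δ) :
    x₁ = x₂ ∧ y₁ = y₂ := by
  obtain ⟨σ, rfl, rfl⟩ := h₁.exists_algHom_eq h₂
  set P := Affine.Point.some _ _ hns₁
  set d := Affine.Point.map (W' := E) (Algebra.ofId K (AlgebraicClosure K)) δ
  have hd : ¬IsOfFinAddOrder d := by
    rw [(Affine.Point.map_injective _).isOfFinAddOrder_iff, isOfFinAddOrder_iff_nsmul_eq_zero]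
    rintro ⟨n, hn, hnδ⟩
    exact hδ n hn hnδ
  have hσNd : Affine.Point.map σ (N • d) = N • d := by
    rw [map_zsmul, Affine.Point.map_baseChange]
  have hσP : Affine.Point.map σ P = P + N • d := horb
  obtain ⟨a, b, hab, hx, hy⟩ := σ.exists_lt_pow_apply_eq
    (Algebra.IsIntegral.isIntegral (R := K) x₁) (Algebra.IsIntegral.isIntegral y₁)
  have hσab : ((a : ℤ) * N) • d = ((b : ℤ) * N) • d := by
    have h : Affine.Point.map (σ ^ a) P = Affine.Point.map (σ ^ b) P := by
      rw [Affine.Point.map_some, Affine.Point.map_some, Affine.Point.some.injEq]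
      exact ⟨hx, hy⟩
    simpa only [Affine.Point.map_pow, AddMonoidHom.iterate_apply_eq_add_nsmul _ hσNd hσP,
      add_right_inj, ← natCast_zsmul, smul_smul] using h
  obtain rfl : N = 0 := by
    by_contra hN
    have hab' := mul_right_cancel₀ hN (injective_zsmul_iff_not_isOfFinAddOrder.2 hd hσab)
    exact hab.ne (mod_cast hab')
  rw [zero_smul, add_zero] at horb
  obtain ⟨hx₁, hy₁⟩ := Affine.Point.some.inj horb
  exact ⟨hx₁.symm, hy₁.symm⟩

open scoped Classical in
/-- if `δ ∈ E(K)` is non-torsion and `J` is a maximal ideal of `K[u,v]`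
containing the Weierstrass equation of `E`, then two roots of `J` lying on the same orbit
under translation by `δ` must coincide. -/
theorem roots_of_maximal_ideal_distinct_orbits [NumberField K]
    (E : WeierstrassCurve K) [E.IsElliptic] (δ : (E.baseChange K).toAffine.Point)
    (hδ : ∀ N : ℕ, 0 < N → N • δ ≠ 0)
    (J : Ideal (Polynomial (Polynomial K))) (hJ : J.IsMaximal)
    (hJE : E.toAffine.polynomial ∈ J)
    {x₁ y₁ x₂ y₂ : AlgebraicClosure K}
    (h₁ : IsRootOf J x₁ y₁) (h₂ : IsRootOf J x₂ y₂)
    (hns₁ : (E.baseChange (AlgebraicClosure K)).toAffine.Nonsingular x₁ y₁)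
    (hns₂ : (E.baseChange (AlgebraicClosure K)).toAffine.Nonsingular x₂ y₂)
    (N : ℤ)
    (horb : Affine.Point.some _ _ hns₂ = Affine.Point.some _ _ hns₁ +
      N • Affine.Point.map (W' := E) (Algebra.ofId K (AlgebraicClosure K)) δ) :
    x₁ = x₂ ∧ y₁ = y₂ :=
  roots_of_maximal_ideal_distinct_orbits_general E δ hδ J hJ h₁ h₂ hns₁ hns₂ N horb
end
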